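/- arXiv:1711.03127 — 3 statements merged into one kernel-verified Lean document; each statement's English description precedes it below -/
import Mathlib

section
/- Let η_c, η_d ∈ (0,1) be charge and discharge efficiencies and p : {1,...,T} → ℝ prices, and let the arbitrage profit of a pair (c, d) be J(c, d) = Σ_{t=1}^{T} p_t (η_d · d_t − c_t / η_c). Suppose (c, d) is feasible and there is a time s with p_s > 0, c_s > 0 and d_s > 0. Define (c', d') by c'_s = c_s − δ, d'_s = d_s − δ with δ = min(c_s, d_s), and c'_t = c_t, d'_t = d_t for all t ≠ s. Then (c', d') is feasible, induces the same energy levels as (c, d) at every time, and J(c', d') > J(c, d). -/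
/-!
Lowering the charge and the discharge at time `s` by the same amount `δ` leaves the net flow
`c - d`, hence every energy level, unchanged, and keeps both rates within their bounds when
`δ ≤ min (c s) (d s)`. It changes the profit by `p s * δ * (1 / ηc - ηd)`, which is positive
because `ηd < 1 < 1 / ηc`: charging and discharging simultaneously only pays the round-trip loss.
-/

/-- Energy level at time `t` induced by charge profile `c` and discharge profile `d`,
starting from initial level `E0`. -/
def Elevel (E0 : ℝ) (c d : ℕ → ℝ) (t : ℕ) : ℝ :=
  E0 + ∑ s ∈ Finset.Icc 1 t, (c s - d s)

/-- Feasibility of a pair of charge/discharge profiles over horizon `{1,...,T}`. -/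
def Feasible (T : ℕ) (E0 Emin Emax Cmax Dmax : ℝ) (c d : ℕ → ℝ) : Prop :=
  (∀ t ∈ Finset.Icc 1 T, 0 ≤ c t ∧ c t ≤ Cmax ∧ 0 ≤ d t ∧ d t ≤ Dmax) ∧
  (∀ t ∈ Finset.Icc 1 T, Emin ≤ Elevel E0 c d t ∧ Elevel E0 c d t ≤ Emax)

/-- Arbitrage profit of the pair `(c, d)` under prices `p` with efficiencies `ηc, ηd`. -/
noncomputable def Profit (T : ℕ) (ηc ηd : ℝ) (p c d : ℕ → ℝ) : ℝ :=
  ∑ t ∈ Finset.Icc 1 T, p t * (ηd * d t - c t / ηc)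

open Function Finset

theorem update_sub_sub_update_sub {α G : Type*} [DecidableEq α] [AddCommGroup G]
    (f g : α → G) (s : α) (δ : G) (t : α) :
    update f s (f s - δ) t - update g s (g s - δ) t = f t - g t := by
  rcases eq_or_ne t s with rfl | h
  · simp only [update_self]
    abel
  · simp only [update_of_ne h]

theorem update_sub_mem_Icc {α : Type*} [DecidableEq α] {f : α → ℝ} {s t : α} {δ M : ℝ}
    (hδ₀ : 0 ≤ δ) (hδ : δ ≤ f s) (hf : 0 ≤ f t ∧ f t ≤ M) :
    0 ≤ update f s (f s - δ) t ∧ update f s (f s - δ) t ≤ M := by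
  rcases eq_or_ne t s with rfl | h
  · simp only [update_self]
    constructor <;> linarith [hf.2]
  · simpa only [update_of_ne h] using hf

theorem Elevel_congr {c d c' d' : ℕ → ℝ} (h : ∀ t, c' t - d' t = c t - d t) (E0 : ℝ) (t : ℕ) :
    Elevel E0 c' d' t = Elevel E0 c d t := by
  simp only [Elevel, h]

theorem Feasible.update_sub {T : ℕ} {E0 Emin Emax Cmax Dmax : ℝ} {c d : ℕ → ℝ}
    (hfeas : Feasible T E0 Emin Emax Cmax Dmax c d) {s : ℕ} {δ : ℝ}
    (hδ₀ : 0 ≤ δ) (hδc : δ ≤ c s) (hδd : δ ≤ d s) :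
    Feasible T E0 Emin Emax Cmax Dmax (update c s (c s - δ)) (update d s (d s - δ)) := by
  obtain ⟨hrates, hlevels⟩ := hfeas
  refine ⟨fun t ht => ?_, fun t ht => ?_⟩
  · obtain ⟨hc₀, hcM, hd₀, hdM⟩ := hrates t ht
    exact ⟨(update_sub_mem_Icc hδ₀ hδc ⟨hc₀, hcM⟩).1, (update_sub_mem_Icc hδ₀ hδc ⟨hc₀, hcM⟩).2,
      (update_sub_mem_Icc hδ₀ hδd ⟨hd₀, hdM⟩).1, (update_sub_mem_Icc hδ₀ hδd ⟨hd₀, hdM⟩).2⟩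
  · rw [Elevel_congr (update_sub_sub_update_sub c d s δ)]
    exact hlevels t ht

theorem Profit_update_sub {T : ℕ} {s : ℕ} (hs : s ∈ Icc 1 T) (ηc ηd : ℝ) (p c d : ℕ → ℝ)
    (δ : ℝ) :
    Profit T ηc ηd p (update c s (c s - δ)) (update d s (d s - δ)) =
      Profit T ηc ηd p c d + p s * δ * (ηc⁻¹ - ηd) := by
  have hterm : ∀ t ∈ Icc 1 T,
      p t * (ηd * update d s (d s - δ) t - update c s (c s - δ) t / ηc) =
        p t * (ηd * d t - c t / ηc) + if t = s then p s * δ * (ηc⁻¹ - ηd) else 0 := by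
    intro t _
    rcases eq_or_ne t s with rfl | h
    · simp only [update_self, if_true]
      ring
    · simp only [update_of_ne h, if_neg h, add_zero]
  rw [Profit, sum_congr rfl hterm, sum_add_distrib, sum_ite_eq' _ s, if_pos hs, Profit]

theorem stmt1_general (T : ℕ) (E0 Emin Emax Cmax Dmax : ℝ)
    (ηc ηd : ℝ) (hηc : ηc ∈ Set.Ioo (0:ℝ) 1) (hηd : ηd ∈ Set.Ioo (0:ℝ) 1)
    (p c d : ℕ → ℝ)
    (hfeas : Feasible T E0 Emin Emax Cmax Dmax c d)
    (s : ℕ) (hs : s ∈ Finset.Icc 1 T) (hps : 0 < p s) (hcs : 0 < c s) (hds : 0 < d s)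
    (c' d' : ℕ → ℝ)
    (hc' : c' = fun t => if t = s then c s - min (c s) (d s) else c t)
    (hd' : d' = fun t => if t = s then d s - min (c s) (d s) else d t) :
    Feasible T E0 Emin Emax Cmax Dmax c' d' ∧
      (∀ t ≤ T, Elevel E0 c' d' t = Elevel E0 c d t) ∧
      Profit T ηc ηd p c d < Profit T ηc ηd p c' d' := by
  set δ := min (c s) (d s)
  obtain rfl : c' = update c s (c s - δ) := by rw [hc']; ext t; rw [update_apply]
  obtain rfl : d' = update d s (d s - δ) := by rw [hd']; ext t; rw [update_apply]
  have hδ : 0 < δ := lt_min hcs hds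
  have hloss : ηd < ηc⁻¹ := hηd.2.trans ((one_lt_inv₀ hηc.1).2 hηc.2)
  refine ⟨hfeas.update_sub hδ.le (min_le_left _ _) (min_le_right _ _),
    fun t _ => Elevel_congr (update_sub_sub_update_sub c d s δ) E0 t, ?_⟩
  rw [Profit_update_sub hs]
  exact lt_add_of_pos_right _ (mul_pos (mul_pos hps hδ) (sub_pos.2 hloss))

theorem stmt1 (T : ℕ) (hT : 0 < T) (E0 Emin Emax Cmax Dmax : ℝ)
    (hE0l : Emin ≤ E0) (hE0u : E0 ≤ Emax) (hC : 0 ≤ Cmax) (hD : 0 ≤ Dmax)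
    (ηc ηd : ℝ) (hηc : ηc ∈ Set.Ioo (0:ℝ) 1) (hηd : ηd ∈ Set.Ioo (0:ℝ) 1)
    (p c d : ℕ → ℝ)
    (hfeas : Feasible T E0 Emin Emax Cmax Dmax c d)
    (s : ℕ) (hs : s ∈ Finset.Icc 1 T) (hps : 0 < p s) (hcs : 0 < c s) (hds : 0 < d s)
    (c' d' : ℕ → ℝ)
    (hc' : c' = fun t => if t = s then c s - min (c s) (d s) else c t)
    (hd' : d' = fun t => if t = s then d s - min (c s) (d s) else d t) :
    Feasible T E0 Emin Emax Cmax Dmax c' d' ∧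
      (∀ t ≤ T, Elevel E0 c' d' t = Elevel E0 c d t) ∧
      Profit T ηc ηd p c d < Profit T ηc ηd p c' d' :=
  stmt1_general T E0 Emin Emax Cmax Dmax ηc ηd hηc hηd p c d hfeas s hs hps hcs hds c' d' hc' hd'
end

section
/- (Paper's Lemma 1, part 1.) Let η_c, η_d ∈ (0,1) and suppose p_t > 0 for all t ∈ {1,...,T}. If (c*, d*) is an optimal solution of the arbitrage maximization problem, i.e., (c*, d*) is feasible and J(c*, d*) ≥ J(c, d) for every feasible (c, d), then for every time t at least one of c*_t and d*_t equals 0, i.e., min(c*_t, d*_t) = 0. -/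
theorem stmt2 (T : ℕ) (hT : 0 < T) (E0 Emin Emax Cmax Dmax : ℝ)
    (hE0l : Emin ≤ E0) (hE0u : E0 ≤ Emax) (hC : 0 ≤ Cmax) (hD : 0 ≤ Dmax)
    (ηc ηd : ℝ) (hηc : ηc ∈ Set.Ioo (0:ℝ) 1) (hηd : ηd ∈ Set.Ioo (0:ℝ) 1)
    (p : ℕ → ℝ) (hp : ∀ t ∈ Finset.Icc 1 T, 0 < p t)
    (cstar dstar : ℕ → ℝ)
    (hfeas : Feasible T E0 Emin Emax Cmax Dmax cstar dstar)
    (hopt : ∀ c d : ℕ → ℝ, Feasible T E0 Emin Emax Cmax Dmax c d →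
      Profit T ηc ηd p c d ≤ Profit T ηc ηd p cstar dstar) :
    ∀ t ∈ Finset.Icc 1 T, min (cstar t) (dstar t) = 0 := by
  intro t ht
  by_contra hmin
  obtain ⟨hbnd, hlev⟩ := hfeas
  obtain ⟨hc0, hcC, hd0, hdD⟩ := hbnd t ht
  set m := min (cstar t) (dstar t) with hmdef
  have hm : 0 < m := lt_of_le_of_ne (le_min hc0 hd0) (Ne.symm hmin)
  set c' := fun s => if s = t then cstar s - m else cstar s with hc'
  set d' := fun s => if s = t then dstar s - m else dstar s with hd'
  have hdiff : ∀ s, c' s - d' s = cstar s - dstar s := by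
    intro s; simp only [hc', hd']; split <;> ring
  have hE : ∀ u, Elevel E0 c' d' u = Elevel E0 cstar dstar u := by
    intro u; unfold Elevel; congr 1
    exact Finset.sum_congr rfl (fun s _ => hdiff s)
  have hfeas' : Feasible T E0 Emin Emax Cmax Dmax c' d' := by
    constructor
    · intro s hs
      obtain ⟨h1, h2, h3, h4⟩ := hbnd s hs
      simp only [hc', hd']
      split
      · next h =>
        subst h
        refine ⟨by simp [hmdef, min_le_left], by linarith,
          by simp [hmdef, min_le_right], by linarith⟩
      · exact ⟨h1, h2, h3, h4⟩
    · intro s hs; rw [hE]; exact hlev s hs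
  have hle := hopt c' d' hfeas'
  have hsum : Profit T ηc ηd p c' d' - Profit T ηc ηd p cstar dstar
      = p t * m * (1/ηc - ηd) := by
    unfold Profit
    rw [← Finset.sum_sub_distrib]
    rw [Finset.sum_eq_single_of_mem t ht]
    · simp only [hc', hd', if_pos rfl]
      ring
    · intro s _ hst
      simp only [hc', hd']
      rw [if_neg hst, if_neg hst]
      ring
  obtain ⟨hηc0, hηc1⟩ := hηc
  obtain ⟨hηd0, hηd1⟩ := hηd
  have h1 : (1:ℝ) < 1/ηc := one_lt_one_div hηc0 hηc1
  have hpos : 0 < p t * m * (1/ηc - ηd) := by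
    have := hp t ht
    apply mul_pos (mul_pos this hm)
    linarith
  linarith
end

section
/- Let η_c, η_d ∈ (0,1) and suppose p_t ≥ 0 for all t ∈ {1,...,T}. Then for every feasible pair (c, d) there exists a feasible pair (c', d') such that min(c'_t, d'_t) = 0 for all t, the energy levels induced by (c', d') equal those induced by (c, d) at every time, and J(c', d') ≥ J(c, d). (It is obtained by subtracting min(c_t, d_t) from both c_t and d_t at every time t.) -/
theorem stmt3 (T : ℕ) (hT : 0 < T) (E0 Emin Emax Cmax Dmax : ℝ)
    (hE0l : Emin ≤ E0) (hE0u : E0 ≤ Emax) (hC : 0 ≤ Cmax) (hD : 0 ≤ Dmax)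
    (ηc ηd : ℝ) (hηc : ηc ∈ Set.Ioo (0:ℝ) 1) (hηd : ηd ∈ Set.Ioo (0:ℝ) 1)
    (p : ℕ → ℝ) (hp : ∀ t ∈ Finset.Icc 1 T, 0 ≤ p t)
    (c d : ℕ → ℝ) (hfeas : Feasible T E0 Emin Emax Cmax Dmax c d) :
    ∃ c' d' : ℕ → ℝ,
      Feasible T E0 Emin Emax Cmax Dmax c' d' ∧
      (∀ t ∈ Finset.Icc 1 T, min (c' t) (d' t) = 0) ∧
      (∀ t ≤ T, Elevel E0 c' d' t = Elevel E0 c d t) ∧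
      Profit T ηc ηd p c d ≤ Profit T ηc ηd p c' d' := by
  refine ⟨fun t => c t - min (c t) (d t), fun t => d t - min (c t) (d t), ?_, ?_, ?_, ?_⟩
  · obtain ⟨hb, he⟩ := hfeas
    constructor
    · intro t ht
      obtain ⟨hc0, hcM, hd0, hdM⟩ := hb t ht
      have h1 : min (c t) (d t) ≤ c t := min_le_left _ _
      have h2 : min (c t) (d t) ≤ d t := min_le_right _ _
      have h3 : 0 ≤ min (c t) (d t) := le_min hc0 hd0
      refine ⟨?_, ?_, ?_, ?_⟩ <;> simp only [] <;> linarith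
    · intro t ht
      have : Elevel E0 (fun t => c t - min (c t) (d t)) (fun t => d t - min (c t) (d t)) t
          = Elevel E0 c d t := by
        unfold Elevel; ring_nf
      rw [this]; exact he t ht
  · intro t ht
    simp only [min_sub_sub_right, sub_self]
  · intro t _; unfold Elevel; ring_nf
  · unfold Profit
    apply Finset.sum_le_sum
    intro t ht
    obtain ⟨hc0, _, hd0, _⟩ := hfeas.1 t ht
    have hpt := hp t ht
    set m := min (c t) (d t) with hmdef
    have hm : 0 ≤ m := le_min hc0 hd0
    have hηc1 : (1:ℝ) ≤ 1 / ηc := by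
      rw [le_div_iff₀ hηc.1]; linarith [hηc.2]
    have h4 : m * ηd ≤ m * (1 / ηc) :=
      mul_le_mul_of_nonneg_left (le_trans (le_of_lt hηd.2) hηc1) hm
    have h5 : (c t - m) / ηc = c t / ηc - m * (1 / ηc) := by ring
    have key : ηd * d t - c t / ηc ≤ ηd * (d t - m) - (c t - m) / ηc := by
      rw [h5]; nlinarith
    exact mul_le_mul_of_nonneg_left key hpt
end
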